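/- arXiv:2305.01324 — 2 statements merged into one kernel-verified Lean document; each statement's English description precedes it below -/
import Mathlib

section
/- Let n ≥ 2 and let T_1, …, T_n be independent and identically distributed exponential random variables with rate ε > 0. For each index i define m_i(i) := T_i and m_i(j) := T_j − 1 for j ≠ i, and set M_i := max_{1 ≤ j ≤ n} m_i(j). Say that the index i is deleted if there exist at least two distinct indices j with m_i(j) ≥ M_i − 1. Then with probability at least 1 − e^{−ε}, at least n − 1 of the n indices are deleted. -/
/-!
Write `X_a := max_{b ≠ a} T_b`. If `T_a ≤ X_a + 1` for every `a`, then for the index `a` of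
the largest `T`, some `b ≠ a` has `T_b ≥ T_a - 1`, and every `i ≠ a` is deleted, witnessed by the
pair `{a, i}` or `{a, b}`. So it suffices to bound the probability that `X_a + 1 < T_a` for some
`a`. Since `X_a ≥ 0` is independent of `T_a`, memorylessness gives
`P[X_a + 1 < T_a] = e^{-ε} P[X_a < T_a]`, and the events `X_a < T_a` are pairwise disjoint.
-/

open MeasureTheory ProbabilityTheory
open scoped Classical

open Finset in
/-- It is `0` when `a` is the only index. -/
noncomputable def maxOthers {ι : Type*} [Fintype ι] (t : ι → ℝ) (a : ι) : ℝ :=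
  ⨆ b : ({a}ᶜ : Finset ι), t b

section Deterministic

variable {ι : Type*} {t : ι → ℝ}

lemma le_maxOthers [Fintype ι] {a b : ι} (hba : b ≠ a) : t b ≤ maxOthers t a :=
  le_ciSup (f := fun b : ({a}ᶜ : Finset ι) => t b) (Finite.bddAbove_range _)
    ⟨b, by simpa using hba⟩

lemma exists_ne_eq_maxOthers [Fintype ι] (h : 1 < Fintype.card ι) (a : ι) :
    ∃ b, b ≠ a ∧ t b = maxOthers t a := by
  have : Nonempty ({a}ᶜ : Finset ι) := by
    obtain ⟨b, hb⟩ := Fintype.exists_ne_of_one_lt_card h a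
    exact ⟨⟨b, by simpa using hb⟩⟩
  obtain ⟨⟨b, hb⟩, hb'⟩ := exists_eq_ciSup_of_finite (f := fun b : ({a}ᶜ : Finset ι) => t b)
  exact ⟨b, by simpa using hb, hb'⟩

lemma eq_of_maxOthers_lt [Fintype ι] {a b : ι} (ha : maxOthers t a < t a)
    (hb : maxOthers t b < t b) : a = b := by
  by_contra hab
  linarith [le_maxOthers (t := t) hab, le_maxOthers (t := t) (Ne.symm hab)]

/-- The value `m_i(j)` of the deletion rule. -/
def deletionValue [DecidableEq ι] (t : ι → ℝ) (i j : ι) : ℝ := if j = i then t i else t j - 1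

def IsDeleted [DecidableEq ι] (t : ι → ℝ) (i : ι) : Prop :=
  ∃ j k : ι, j ≠ k ∧ (⨆ l, deletionValue t i l) - 1 ≤ deletionValue t i j ∧
    (⨆ l, deletionValue t i l) - 1 ≤ deletionValue t i k

lemma iSup_deletionValue_le [DecidableEq ι] {a : ι} (ha : ∀ c, t c ≤ t a) (i : ι) :
    ⨆ l, deletionValue t i l ≤ max (t i) (t a - 1) := by
  have : Nonempty ι := ⟨i⟩
  refine ciSup_le fun l => ?_
  unfold deletionValue
  split_ifs
  · exact le_max_left _ _
  · linarith [le_max_right (t i) (t a - 1), ha l]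

lemma isDeleted_of_ne_max [DecidableEq ι] {a b i : ι} (ha : ∀ c, t c ≤ t a) (hba : b ≠ a)
    (hb : t a - 1 ≤ t b) (hia : i ≠ a) : IsDeleted t i := by
  have hM := iSup_deletionValue_le ha i
  have hai : deletionValue t i a = t a - 1 := if_neg (Ne.symm hia)
  have hii : deletionValue t i i = t i := if_pos rfl
  rcases le_or_gt (t a - 1) (t i) with hi | hi
  · refine ⟨a, i, Ne.symm hia, ?_, ?_⟩ <;> grind
  · have hbi : b ≠ i := by rintro rfl; linarith
    have hbv : deletionValue t i b = t b - 1 := if_neg hbi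
    refine ⟨a, b, Ne.symm hba, ?_, ?_⟩ <;> grind

open Finset in
lemma card_sub_one_le_card_isDeleted [Fintype ι] [DecidableEq ι]
    (h : ∀ a, t a ≤ maxOthers t a + 1) : Fintype.card ι - 1 ≤ #{i | IsDeleted t i} := by
  rcases le_or_gt (Fintype.card ι) 1 with hcard | hcard
  · omega
  have : Nonempty ι := Fintype.card_pos_iff.mp (by omega)
  obtain ⟨a, ha⟩ := Finite.exists_max t
  obtain ⟨b, hba, hb⟩ := exists_ne_eq_maxOthers (t := t) hcard a
  have hsub : univ.erase a ⊆ univ.filter (IsDeleted t) := fun i hi =>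
    mem_filter.2 ⟨mem_univ i, isDeleted_of_ne_max ha hba (by linarith [h a]) (ne_of_mem_erase hi)⟩
  simpa [card_erase_of_mem] using card_le_card hsub

end Deterministic

section Probability

variable {Ω : Type*} [MeasurableSpace Ω] {μ : Measure Ω}

lemma ProbabilityTheory.IndepFun.measure_add_lt_eq_lintegral [IsFiniteMeasure μ] {X Y : Ω → ℝ}
    (hX : Measurable X) (hY : Measurable Y) (hXY : IndepFun X Y μ) (c : ℝ) :
    μ {ω | X ω + c < Y ω} = ∫⁻ x, μ.map Y (Set.Ioi (x + c)) ∂μ.map X := by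
  have hset : MeasurableSet {p : ℝ × ℝ | p.1 + c < p.2} :=
    measurableSet_lt (measurable_fst.add_const c) measurable_snd
  change μ ((fun ω => (X ω, Y ω)) ⁻¹' {p | p.1 + c < p.2}) = _
  rw [← Measure.map_apply (hX.prodMk hY) hset,
    (indepFun_iff_map_prod_eq_prod_map_map hX.aemeasurable hY.aemeasurable).mp hXY,
    Measure.prod_apply hset]
  rfl

lemma ProbabilityTheory.IndepFun.measure_add_lt_eq_exp_mul [IsFiniteMeasure μ] {X Y : Ω → ℝ}
    {eps c : ℝ} (hX : Measurable X) (hY : Measurable Y) (hXY : IndepFun X Y μ)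
    (hX0 : ∀ᵐ ω ∂μ, 0 ≤ X ω)
    (hexp : ∀ t : ℝ, 0 ≤ t → μ {ω | t < Y ω} = ENNReal.ofReal (Real.exp (-(eps * t))))
    (hc : 0 ≤ c) :
    μ {ω | X ω + c < Y ω} = ENNReal.ofReal (Real.exp (-(eps * c))) * μ {ω | X ω < Y ω} := by
  have hYIoi (t : ℝ) (ht : 0 ≤ t) :
      μ.map Y (Set.Ioi t) = ENNReal.ofReal (Real.exp (-(eps * t))) := by
    rw [Measure.map_apply hY measurableSet_Ioi]
    exact hexp t ht
  have hshift : ∀ᵐ x ∂μ.map X,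
      μ.map Y (Set.Ioi (x + c)) = ENNReal.ofReal (Real.exp (-(eps * c))) * μ.map Y (Set.Ioi x) := by
    filter_upwards [(ae_map_iff hX.aemeasurable measurableSet_Ici).2 hX0] with x (hx : 0 ≤ x)
    rw [hYIoi _ (by linarith), hYIoi _ hx, ← ENNReal.ofReal_mul (Real.exp_pos _).le,
      ← Real.exp_add]
    ring_nf
  have h0 : μ {ω | X ω < Y ω} = ∫⁻ x, μ.map Y (Set.Ioi x) ∂μ.map X := by
    simpa using hXY.measure_add_lt_eq_lintegral hX hY 0
  rw [hXY.measure_add_lt_eq_lintegral hX hY c, lintegral_congr_ae hshift,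
    lintegral_const_mul' _ _ ENNReal.ofReal_ne_top, h0]

variable {ι : Type*} [Fintype ι] {T : ι → Ω → ℝ}

lemma measurable_maxOthers (hT : ∀ i, Measurable (T i)) (a : ι) :
    Measurable fun ω => maxOthers (T · ω) a :=
  Measurable.iSup fun b => hT b

lemma ProbabilityTheory.iIndepFun.indepFun_maxOthers (hindep : iIndepFun T μ)
    (hT : ∀ i, Measurable (T i)) (a : ι) :
    IndepFun (fun ω => maxOthers (T · ω) a) (T a) μ :=
  (hindep.indepFun_finset {a}ᶜ {a} disjoint_compl_left hT).comp
    (Measurable.iSup fun b => measurable_pi_apply b)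
    (measurable_pi_apply (⟨a, Finset.mem_singleton_self a⟩ : ({a} : Finset ι)))

lemma measure_iUnion_maxOthers_add_one_lt_le [IsProbabilityMeasure μ] {eps : ℝ}
    (hT : ∀ i, Measurable (T i)) (hindep : iIndepFun T μ)
    (hexp : ∀ i, ∀ t : ℝ, 0 ≤ t → μ {ω | t < T i ω} = ENNReal.ofReal (Real.exp (-(eps * t)))) :
    μ (⋃ a, {ω | maxOthers (T · ω) a + 1 < T a ω}) ≤ ENNReal.ofReal (Real.exp (-eps)) := by
  have hpos : ∀ᵐ ω ∂μ, ∀ i, 0 ≤ T i ω := by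
    refine ae_all_iff.2 fun i => ?_
    have hT0 : ∀ᵐ ω ∂μ, 0 < T i ω := by
      rw [ae_iff_measure_eq (measurableSet_lt measurable_const (hT i)).nullMeasurableSet,
        hexp i 0 le_rfl, measure_univ]
      simp
    filter_upwards [hT0] with ω h using h.le
  have hmax0 (a : ι) : ∀ᵐ ω ∂μ, 0 ≤ maxOthers (T · ω) a := by
    filter_upwards [hpos] with ω hω using Real.iSup_nonneg fun b => hω b
  have hdisj : Pairwise (Function.onFun Disjoint fun a => {ω | maxOthers (T · ω) a < T a ω}) :=
    fun a b hab => Set.disjoint_left.2 fun ω ha hb => hab (eq_of_maxOthers_lt ha hb)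
  calc μ (⋃ a, {ω | maxOthers (T · ω) a + 1 < T a ω})
      ≤ ∑' a, μ {ω | maxOthers (T · ω) a + 1 < T a ω} := measure_iUnion_le _
    _ = ∑' a, ENNReal.ofReal (Real.exp (-eps)) * μ {ω | maxOthers (T · ω) a < T a ω} := by
      refine tsum_congr fun a => ?_
      simpa using (hindep.indepFun_maxOthers hT a).measure_add_lt_eq_exp_mul
        (measurable_maxOthers hT a) (hT a) (hmax0 a) (hexp a) zero_le_one
    _ = ENNReal.ofReal (Real.exp (-eps)) * ∑' a, μ {ω | maxOthers (T · ω) a < T a ω} :=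
      ENNReal.tsum_mul_left
    _ ≤ ENNReal.ofReal (Real.exp (-eps)) * 1 := by
      gcongr
      refine (tsum_measure_le_measure_univ (μ := μ)
        (fun a => (measurableSet_lt (measurable_maxOthers hT a) (hT a)).nullMeasurableSet)
        fun a b hab => (hdisj hab).aedisjoint).trans_eq measure_univ
    _ = _ := mul_one _

end Probability

theorem stmt_15_general {Ω : Type} [MeasurableSpace Ω] (μ : Measure Ω) [IsProbabilityMeasure μ]
    (eps : ℝ) (n : ℕ)
    (T : Fin n → Ω → ℝ)
    (hmeas : ∀ i, Measurable (T i))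
    (hindep : iIndepFun T μ)
    (hexp : ∀ i, ∀ t : ℝ, 0 ≤ t →
      μ {ω | t < T i ω} = ENNReal.ofReal (Real.exp (-(eps * t)))) :
    ENNReal.ofReal (1 - Real.exp (-eps)) ≤
      μ {ω | n - 1 ≤ (Finset.univ.filter fun i : Fin n =>
          ∃ j k : Fin n, j ≠ k ∧
            (⨆ l : Fin n, (if l = i then T i ω else T l ω - 1)) - 1 ≤
              (if j = i then T i ω else T j ω - 1) ∧
            (⨆ l : Fin n, (if l = i then T i ω else T l ω - 1)) - 1 ≤
              (if k = i then T i ω else T k ω - 1)).card} := by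
  set bad := ⋃ a, {ω | maxOthers (T · ω) a + 1 < T a ω}
  refine le_trans ?_ (measure_mono (s := badᶜ) fun ω hω => ?_)
  · calc ENNReal.ofReal (1 - Real.exp (-eps))
        = 1 - ENNReal.ofReal (Real.exp (-eps)) := by
          rw [ENNReal.ofReal_sub _ (Real.exp_pos _).le, ENNReal.ofReal_one]
      _ ≤ 1 - μ bad :=
          tsub_le_tsub_left (measure_iUnion_maxOthers_add_one_lt_le hmeas hindep hexp) 1
      _ ≤ μ badᶜ := tsub_le_iff_left.2 (measure_univ (μ := μ) ▸ measure_univ_le_add_compl bad)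
  · simp only [bad, Set.mem_compl_iff, Set.mem_iUnion, Set.mem_ofPred_eq, not_exists,
      not_lt] at hω
    have hcard := card_sub_one_le_card_isDeleted hω
    rw [Fintype.card_fin] at hcard
    simp only [Set.mem_ofPred_eq]
    -- the statement decides its filter by `Fintype.decidableExistsFintype`, not classically
    convert hcard
    exact Iff.rfl

/-- (Elkin–Neiman deletion rule on the complete graph `K_n`.) Let
`n ≥ 2` and let `T 1, …, T n` be i.i.d. exponential random variables with rate `ε > 0`.
For each index `i` set `m_i(i) = T i` and `m_i(j) = T j - 1` for `j ≠ i`, and let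
`M_i = max_j m_i(j)`. The index `i` is deleted if at least two distinct indices `j`
satisfy `m_i(j) ≥ M_i - 1`. Then with probability at least `1 - e^{-ε}`, at least
`n - 1` of the `n` indices are deleted. -/
theorem stmt_15 {Ω : Type} [MeasurableSpace Ω] (μ : Measure Ω) [IsProbabilityMeasure μ]
    (eps : ℝ) (heps : 0 < eps) (n : ℕ) (hn : 2 ≤ n)
    (T : Fin n → Ω → ℝ)
    (hmeas : ∀ i, Measurable (T i))
    (hindep : iIndepFun T μ)
    (hexp : ∀ i, ∀ t : ℝ, 0 ≤ t →
      μ {ω | t < T i ω} = ENNReal.ofReal (Real.exp (-(eps * t)))) :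
    ENNReal.ofReal (1 - Real.exp (-eps)) ≤
      μ {ω | n - 1 ≤ (Finset.univ.filter fun i : Fin n =>
          ∃ j k : Fin n, j ≠ k ∧
            (⨆ l : Fin n, (if l = i then T i ω else T l ω - 1)) - 1 ≤
              (if j = i then T i ω else T j ω - 1) ∧
            (⨆ l : Fin n, (if l = i then T i ω else T l ω - 1)) - 1 ≤
              (if k = i then T i ω else T k ω - 1)).card} :=
  stmt_15_general μ eps n T hmeas hindep hexp
end

section
/- Consider a covering integer linear program given by A ∈ ℝ_{≥0}^{m×n}, b ∈ ℝ_{≥0}^{m} and weights w ∈ ℤ_{≥0}^{n}, and suppose it has at least one feasible solution. Let e_j := {i : A_{j,i} ≠ 0} denote the j-th hyperedge, and let S_1, …, S_k ⊆ {1,…,n} be subsets such that every hyperedge e_j is contained in at least one S_i. For each i, the local instance on S_i consists of the vectors y ∈ {0,1}^n with y_v = 0 for all v ∉ S_i that satisfy every constraint j with e_j ⊆ S_i; let y^{(i)} be a minimum-weight solution of the local instance on S_i. Define z ∈ {0,1}^n by z_v := max_{1 ≤ i ≤ k} y^{(i)}_v. Then z is feasible for the full covering program (Az ≥ b), and for every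 feasible q ∈ {0,1}^n, w·z ≤ Σ_{v=1}^{n} |{i : v ∈ S_i}| · w_v · q_v. -/
open Finset
open scoped Classical

lemma my_sum_biUnion_le {α ι : Type*} [DecidableEq α] (s : Finset ι) (t : ι → Finset α)
    (f : α → ℕ) : ∑ v ∈ s.biUnion t, f v ≤ ∑ i ∈ s, ∑ v ∈ t i, f v := by
  induction s using Finset.induction with
  | empty => simp
  | insert a s h ih =>
    rw [Finset.biUnion_insert, Finset.sum_insert h]
    calc ∑ v ∈ t a ∪ s.biUnion t, f v ≤ ∑ v ∈ t a, f v + ∑ v ∈ s.biUnion t, f v := by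
          rw [← Finset.sum_union_inter]; exact Nat.le_add_right _ _
      _ ≤ _ := Nat.add_le_add_left ih _

/-- For a feasible covering ILP with nonnegative data, suppose the
subsets `S 1, …, S k` of the variables cover every hyperedge `e_j = {i : A j i ≠ 0}`.
If `y i` is a minimum-weight solution of the local instance on `S i` (vectors supported
on `S i` satisfying every constraint `j` with `e_j ⊆ S i`), then the combined vector
`z = ⋃ i, y i` (pointwise maximum, i.e. union in the subset representation of 0-1
vectors) is feasible for the full program, and for every feasible `q`,
`w·z ≤ ∑_v |{i : v ∈ S i}|·w_v·q_v`. -/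
theorem stmt_16 {m n k : ℕ}
    (A : Matrix (Fin m) (Fin n) ℝ) (b : Fin m → ℝ) (w : Fin n → ℕ)
    (hA : ∀ j i, 0 ≤ A j i) (hb : ∀ j, 0 ≤ b j)
    (hfeas : ∃ q : Finset (Fin n), ∀ j, b j ≤ ∑ i ∈ q, A j i)
    (S : Fin k → Finset (Fin n))
    (hcover : ∀ j : Fin m, ∃ i : Fin k, ∀ v : Fin n, A j v ≠ 0 → v ∈ S i)
    (y : Fin k → Finset (Fin n))
    (hyS : ∀ i, y i ⊆ S i)
    (hyfeas : ∀ i, ∀ j : Fin m, (∀ v : Fin n, A j v ≠ 0 → v ∈ S i) →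
      b j ≤ ∑ v ∈ y i, A j v)
    (hyopt : ∀ i, ∀ y' : Finset (Fin n), y' ⊆ S i →
      (∀ j : Fin m, (∀ v : Fin n, A j v ≠ 0 → v ∈ S i) → b j ≤ ∑ v ∈ y', A j v) →
      ∑ v ∈ y i, w v ≤ ∑ v ∈ y', w v) :
    (∀ j, b j ≤ ∑ v ∈ Finset.univ.biUnion y, A j v) ∧
    ∀ q : Finset (Fin n), (∀ j, b j ≤ ∑ i ∈ q, A j i) →
      ∑ v ∈ Finset.univ.biUnion y, w v ≤
        ∑ v ∈ q, (Finset.univ.filter fun i : Fin k => v ∈ S i).card * w v := by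
  constructor
  · intro j
    obtain ⟨i, hi⟩ := hcover j
    refine le_trans (hyfeas i j hi) (Finset.sum_le_sum_of_subset_of_nonneg ?_ ?_)
    · intro v hv
      exact Finset.mem_biUnion.2 ⟨i, Finset.mem_univ i, hv⟩
    · intro v _ _; exact hA j v
  · intro q hq
    calc ∑ v ∈ Finset.univ.biUnion y, w v
        ≤ ∑ i : Fin k, ∑ v ∈ y i, w v := my_sum_biUnion_le _ _ _
      _ ≤ ∑ i : Fin k, ∑ v ∈ q ∩ S i, w v := by
          refine Finset.sum_le_sum fun i _ => hyopt i (q ∩ S i)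
            (Finset.inter_subset_right) ?_
          intro j hj
          refine le_trans (hq j) (le_of_eq ?_)
          refine (Finset.sum_subset Finset.inter_subset_left ?_).symm
          intro v hv hv2
          by_contra h
          exact hv2 (Finset.mem_inter.2 ⟨hv, hj v h⟩)
      _ = ∑ v ∈ q, (Finset.univ.filter fun i : Fin k => v ∈ S i).card * w v := by
          have : ∀ i : Fin k, ∑ v ∈ q ∩ S i, w v
              = ∑ v ∈ q, if v ∈ S i then w v else 0 := by
            intro i
            exact (Finset.sum_ite_mem q (S i) w).symm
          simp_rw [this]
          rw [Finset.sum_comm]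
          refine Finset.sum_congr rfl fun v _ => ?_
          simp [Finset.sum_ite, mul_comm]
end
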